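/- Let D be a positive definite matrix. The inverse of the linear map J_D(B) = ∫₀¹ D^t B D^{1−t} dt on M_n is the map B ↦ ∫₀^∞ (D+t)⁻¹ B (D+t)⁻¹ dt. -/

import Mathlib

/-!
Diagonalize `D = U diag(λ) U*`. Conjugated by `U`, both maps act entrywise on `U* B U`:
`J_D` multiplies the `(k, l)` entry by `∫₀¹ λₖ^t λₗ^(1-t) dt`, the logarithmic mean `L(λₖ, λₗ)`,
and the second map multiplies it by `∫₀^∞ dt / ((λₖ + t)(λₗ + t)) = 1 / L(λₖ, λₗ)`.
They are therefore Schur multipliers in the same basis with reciprocal symbols.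
-/

open Matrix
open scoped ComplexOrder

/-- `f` applied to a Hermitian matrix via the spectral theorem. -/
noncomputable def hermApply {n : ℕ} (f : ℝ → ℝ) (A : Matrix (Fin n) (Fin n) ℂ)
    (hA : A.IsHermitian) : Matrix (Fin n) (Fin n) ℂ :=
  (hA.eigenvectorUnitary : Matrix (Fin n) (Fin n) ℂ) *
    Matrix.diagonal (fun i => ((f (hA.eigenvalues i) : ℝ) : ℂ)) *
    (star hA.eigenvectorUnitary : Matrix (Fin n) (Fin n) ℂ)

open MeasureTheory Real Set Filter Topology Unitary

/-- The logarithmic mean; `logMean a b = b * f (a / b)` for `f x = (x - 1) / log x`. -/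
noncomputable def logMean (a b : ℝ) : ℝ :=
  if a = b then a else (a - b) / (log a - log b)

section LogMean

variable {a b : ℝ}

lemma log_sub_log_ne_zero (ha : 0 < a) (hb : 0 < b) (hab : a ≠ b) : log a - log b ≠ 0 :=
  sub_ne_zero.mpr fun h => hab (log_injOn_pos ha hb h)

lemma logMean_pos (ha : 0 < a) (hb : 0 < b) : 0 < logMean a b := by
  unfold logMean
  split_ifs with hab
  · exact ha
  · rcases lt_or_gt_of_ne hab with h | h
    · exact div_pos_of_neg_of_neg (by linarith) (by linarith [log_lt_log ha h])
    · exact div_pos (by linarith) (by linarith [log_lt_log hb h])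

lemma integral_rpow_mul_rpow_one_sub (ha : 0 < a) (hb : 0 < b) :
    ∫ t in (0 : ℝ)..1, a ^ t * b ^ (1 - t) = logMean a b := by
  unfold logMean
  split_ifs with hab
  · subst hab
    simp [← rpow_add ha]
  · have hc : log a - log b ≠ 0 := log_sub_log_ne_zero ha hb hab
    have hexp : ∀ t : ℝ, a ^ t * b ^ (1 - t) = b * exp ((log a - log b) * t) := fun t => by
      rw [rpow_def_of_pos ha, rpow_def_of_pos hb, ← exp_log hb, ← exp_add, ← exp_add, log_exp]
      ring_nf
    simp_rw [hexp, intervalIntegral.integral_const_mul,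
      intervalIntegral.integral_comp_mul_left (fun x => exp x) hc, integral_exp]
    rw [mul_one, mul_zero, exp_zero, exp_sub, exp_log ha, exp_log hb, smul_eq_mul]
    field_simp

lemma exists_primitive_inv_add_mul_inv_add (ha : 0 < a) (hb : 0 < b) :
    ∃ g : ℝ → ℝ, (∀ t ∈ Ici (0 : ℝ), HasDerivAt g ((a + t)⁻¹ * (b + t)⁻¹) t) ∧
      Tendsto g atTop (𝓝 0) ∧ g 0 = -(logMean a b)⁻¹ := by
  have hadd : ∀ {c : ℝ}, 0 < c → ∀ t ∈ Ici (0 : ℝ), 0 < c + t := fun hc t ht => by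
    have : (0 : ℝ) ≤ t := ht; positivity
  unfold logMean
  split_ifs with hab
  · subst hab
    refine ⟨fun t => -(a + t)⁻¹, fun t ht => ?_, ?_, by simp⟩
    · refine ((((hasDerivAt_id' t).const_add a).inv (hadd ha t ht).ne').neg).congr_deriv ?_
      field_simp
    · simpa using (tendsto_atTop_add_const_left _ a tendsto_id).inv_tendsto_atTop.neg
  · refine ⟨fun t => (log (a + t) - log (b + t)) / (b - a), fun t ht => ?_, ?_, ?_⟩
    · have hat := hadd ha t ht
      have hbt := hadd hb t ht
      refine (((((hasDerivAt_id' t).const_add a).log hat.ne').sub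
        (((hasDerivAt_id' t).const_add b).log hbt.ne')).div_const (b - a)).congr_deriv ?_
      field_simp [sub_ne_zero.mpr (Ne.symm hab)]
      ring
    · have h := ((tendsto_log_comp_add_sub_log a).sub (tendsto_log_comp_add_sub_log b)).div_const
        (b - a)
      simp only [sub_sub_sub_cancel_right, sub_zero, zero_div] at h
      simpa only [add_comm] using h
    · simp only [inv_div, add_zero]
      rw [← neg_sub a b, div_neg, ← neg_div, neg_sub]

lemma integrableOn_Ioi_inv_add_mul_inv_add (ha : 0 < a) (hb : 0 < b) :
    IntegrableOn (fun t => (a + t)⁻¹ * (b + t)⁻¹) (Ioi 0) := by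
  obtain ⟨g, hg, hlim, -⟩ := exists_primitive_inv_add_mul_inv_add ha hb
  exact integrableOn_Ioi_deriv_of_nonneg' hg (fun t (ht : 0 < t) => by positivity) hlim

lemma integral_Ioi_inv_add_mul_inv_add (ha : 0 < a) (hb : 0 < b) :
    ∫ t in Ioi (0 : ℝ), (a + t)⁻¹ * (b + t)⁻¹ = (logMean a b)⁻¹ := by
  obtain ⟨g, hg, hlim, hg0⟩ := exists_primitive_inv_add_mul_inv_add ha hb
  rw [integral_Ioi_of_hasDerivAt_of_nonneg' hg (fun t (ht : 0 < t) => by positivity) hlim, hg0,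
    zero_sub, neg_neg]

end LogMean

section SchurMultiplier

variable {m R : Type*} [Fintype m] [DecidableEq m] [CommRing R] [StarRing R]

/-- The Schur multiplier with symbol `φ` in the orthonormal basis formed by the columns of `u`. -/
def schurMulIn (u : unitary (Matrix m m R)) (φ B : Matrix m m R) : Matrix m m R :=
  conjStarAlgAut R _ u (φ ⊙ (conjStarAlgAut R _ u).symm B)

lemma schurMulIn_schurMulIn (u : unitary (Matrix m m R)) (φ ψ B : Matrix m m R) :
    schurMulIn u φ (schurMulIn u ψ B) = schurMulIn u (φ ⊙ ψ) B := by
  simp only [schurMulIn, StarAlgEquiv.symm_apply_apply, hadamard_assoc]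

lemma schurMulIn_of_one (u : unitary (Matrix m m R)) (B : Matrix m m R) :
    schurMulIn u (of 1) B = B := by
  simp only [schurMulIn, of_one_hadamard, StarAlgEquiv.apply_symm_apply]

end SchurMultiplier

section EntrywiseIntegral

variable {α l m n o 𝕜 : Type*} [Fintype m] [Fintype n] [MeasurableSpace α] {μ : Measure α}

lemma of_integral_mul_mul [RCLike 𝕜] (P : Matrix l m 𝕜) (M : α → Matrix m n 𝕜)
    (Q : Matrix n o 𝕜) (hM : ∀ k k', Integrable (fun t => M t k k') μ) :
    (of fun i j => ∫ t, (P * M t * Q) i j ∂μ) = P * (of fun k k' => ∫ t, M t k k' ∂μ) * Q := by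
  ext i j
  simp only [of_apply, mul_apply, Finset.sum_mul]
  rw [integral_finsetSum _ fun k' _ => integrable_finsetSum _ fun k _ =>
    ((hM k k').const_mul _).mul_const _]
  refine Finset.sum_congr rfl fun k' _ => ?_
  rw [integral_finsetSum _ fun k _ => ((hM k k').const_mul _).mul_const _]
  refine Finset.sum_congr rfl fun k _ => ?_
  rw [integral_mul_const, integral_const_mul]

variable [DecidableEq m]

lemma integrable_diagonal_mul_mul_diagonal_apply {d e : α → m → ℝ} (C : Matrix m m ℂ) {k l : m}
    (hde : Integrable (fun t => d t k * e t l) μ) :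
    Integrable (fun t =>
      (diagonal (fun i => (d t i : ℂ)) * C * diagonal (fun i => (e t i : ℂ))) k l) μ := by
  refine (hde.ofReal.mul_const (C k l)).congr (ae_of_all _ fun t => ?_)
  simp only [mul_diagonal, diagonal_mul, RCLike.ofReal_eq_complex_ofReal, Complex.ofReal_mul]
  ring

lemma of_integral_diagonal_mul_mul_diagonal (d e : α → m → ℝ) (C : Matrix m m ℂ) :
    (of fun k l =>
      ∫ t, (diagonal (fun i => (d t i : ℂ)) * C * diagonal (fun i => (e t i : ℂ))) k l ∂μ) =
      (of fun k l => ((∫ t, d t k * e t l ∂μ : ℝ) : ℂ)) ⊙ C := by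
  ext k l
  simp only [of_apply, hadamard_apply, mul_diagonal, diagonal_mul, mul_right_comm _ (C k l),
    ← Complex.ofReal_mul, integral_mul_const, integral_complex_ofReal]

end EntrywiseIntegral

section HermApply

variable {n : ℕ} {A : Matrix (Fin n) (Fin n) ℂ}

lemma hermApply_eq_conjStarAlgAut (f : ℝ → ℝ) (hA : A.IsHermitian) :
    hermApply f A hA = conjStarAlgAut ℂ _ hA.eigenvectorUnitary
      (diagonal fun i => ((f (hA.eigenvalues i) : ℝ) : ℂ)) :=
  rfl

lemma inv_add_smul_one_eq_hermApply (hA : A.IsHermitian) {t : ℝ}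
    (ht : ∀ i, hA.eigenvalues i + t ≠ 0) :
    (A + (t : ℂ) • 1)⁻¹ = hermApply (fun x => (x + t)⁻¹) A hA := by
  have hsum : A + (t : ℂ) • 1 = hermApply (fun x => x + t) A hA := by
    conv_lhs => rw [hA.spectral_theorem, ← map_one (conjStarAlgAut ℂ _ hA.eigenvectorUnitary),
      ← map_smul, ← map_add]
    rw [hermApply_eq_conjStarAlgAut, smul_one_eq_diagonal, diagonal_add]
    simp
  refine inv_eq_left_inv ?_
  rw [hsum, hermApply_eq_conjStarAlgAut, hermApply_eq_conjStarAlgAut, ← map_mul,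
    diagonal_mul_diagonal]
  have hcancel : (fun i => (((hA.eigenvalues i + t)⁻¹ : ℝ) : ℂ) * ((hA.eigenvalues i + t : ℝ) : ℂ))
      = fun _ => 1 :=
    funext fun i => by rw [← Complex.ofReal_mul, inv_mul_cancel₀ (ht i), Complex.ofReal_one]
  rw [hcancel, diagonal_one, map_one]

lemma of_integral_hermApply_mul_mul_hermApply (hA : A.IsHermitian) {μ : Measure ℝ}
    (f g : ℝ → ℝ → ℝ) (B : Matrix (Fin n) (Fin n) ℂ)
    (hfg : ∀ k l, Integrable (fun t => f t (hA.eigenvalues k) * g t (hA.eigenvalues l)) μ) :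
    (of fun i j => ∫ t, (hermApply (f t) A hA * B * hermApply (g t) A hA) i j ∂μ) =
      schurMulIn hA.eigenvectorUnitary
        (of fun k l => ((∫ t, f t (hA.eigenvalues k) * g t (hA.eigenvalues l) ∂μ : ℝ) : ℂ)) B := by
  have hconj : ∀ t, hermApply (f t) A hA * B * hermApply (g t) A hA =
      hA.eigenvectorUnitary * (diagonal (fun k => ((f t (hA.eigenvalues k) : ℝ) : ℂ)) *
        (conjStarAlgAut ℂ _ hA.eigenvectorUnitary).symm B *
        diagonal (fun l => ((g t (hA.eigenvalues l) : ℝ) : ℂ))) *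
        star (hA.eigenvectorUnitary : Matrix (Fin n) (Fin n) ℂ) :=
    fun t => by simp only [hermApply, conjStarAlgAut_symm_apply, Matrix.mul_assoc]
  simp_rw [hconj]
  rw [of_integral_mul_mul _ _ _ fun k l => integrable_diagonal_mul_mul_diagonal_apply
      (d := fun t i => f t (hA.eigenvalues i)) (e := fun t i => g t (hA.eigenvalues i)) _ (hfg k l),
    of_integral_diagonal_mul_mul_diagonal (fun t i => f t (hA.eigenvalues i))
      (fun t i => g t (hA.eigenvalues i))]
  rfl

end HermApply

section PosDef

variable {n : ℕ} {A : Matrix (Fin n) (Fin n) ℂ}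

lemma of_intervalIntegral_rpow_mul_mul_rpow (hA : A.PosDef) (B : Matrix (Fin n) (Fin n) ℂ) :
    (of fun i j => ∫ t in (0 : ℝ)..1,
      (hermApply (fun x => x ^ t) A hA.1 * B * hermApply (fun x => x ^ (1 - t)) A hA.1) i j) =
      schurMulIn hA.1.eigenvectorUnitary
        (of fun k l => (logMean (hA.1.eigenvalues k) (hA.1.eigenvalues l) : ℂ)) B := by
  have hev := hA.eigenvalues_pos
  simp_rw [intervalIntegral.integral_of_le zero_le_one]
  refine (of_integral_hermApply_mul_mul_hermApply hA.1 (fun t x => x ^ t)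
    (fun t x => x ^ (1 - t)) B fun k l => Continuous.integrableOn_Ioc ?_).trans ?_
  · exact (continuous_const.rpow continuous_id fun _ => Or.inl (hev k).ne').mul
      (continuous_const.rpow (continuous_const.sub continuous_id) fun _ => Or.inl (hev l).ne')
  · simp_rw [← intervalIntegral.integral_of_le zero_le_one,
      integral_rpow_mul_rpow_one_sub (hev _) (hev _)]

lemma of_integral_resolvent_mul_mul_resolvent (hA : A.PosDef) (B : Matrix (Fin n) (Fin n) ℂ) :
    (of fun i j => ∫ t in Ioi (0 : ℝ), ((A + (t : ℂ) • 1)⁻¹ * B * (A + (t : ℂ) • 1)⁻¹) i j) =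
      schurMulIn hA.1.eigenvectorUnitary
        (of fun k l => (((logMean (hA.1.eigenvalues k) (hA.1.eigenvalues l))⁻¹ : ℝ) : ℂ)) B := by
  have hev := hA.eigenvalues_pos
  have hresolvent : (of fun i j => ∫ t in Ioi (0 : ℝ),
      ((A + (t : ℂ) • 1)⁻¹ * B * (A + (t : ℂ) • 1)⁻¹) i j) = of fun i j => ∫ t in Ioi (0 : ℝ),
      (hermApply (fun x => (x + t)⁻¹) A hA.1 * B * hermApply (fun x => (x + t)⁻¹) A hA.1) i j := by
    ext i j
    refine setIntegral_congr_fun measurableSet_Ioi fun t (ht : 0 < t) => ?_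
    rw [inv_add_smul_one_eq_hermApply hA.1 fun i => (add_pos (hev i) ht).ne']
  rw [hresolvent]
  refine (of_integral_hermApply_mul_mul_hermApply hA.1 (fun t x => (x + t)⁻¹) (fun t x => (x + t)⁻¹)
    B fun k l => integrableOn_Ioi_inv_add_mul_inv_add (hev k) (hev l)).trans ?_
  simp_rw [integral_Ioi_inv_add_mul_inv_add (hev _) (hev _)]

end PosDef

/-- for positive definite `D`, the inverse of the map
`J_D : B ↦ ∫₀¹ D^t B D^{1-t} dt` is `B ↦ ∫₀^∞ (D+t)⁻¹ B (D+t)⁻¹ dt`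
(integrals taken entrywise; `D^t` is defined by functional calculus). -/
theorem stmt5 {n : ℕ} (D : Matrix (Fin n) (Fin n) ℂ) (hD : D.PosDef)
    (JD K : Matrix (Fin n) (Fin n) ℂ → Matrix (Fin n) (Fin n) ℂ)
    (hJD : ∀ B, JD B = Matrix.of fun i j => ∫ t in (0 : ℝ)..1,
      (hermApply (fun x => x ^ t) D hD.1 * B * hermApply (fun x => x ^ (1 - t)) D hD.1) i j)
    (hK : ∀ B, K B = Matrix.of fun i j => ∫ t in Set.Ioi (0 : ℝ),
      ((D + (t : ℂ) • 1)⁻¹ * B * (D + (t : ℂ) • 1)⁻¹) i j) :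
    ∀ B, JD (K B) = B ∧ K (JD B) = B := by
  have hsymbols : (of fun k l => (logMean (hD.1.eigenvalues k) (hD.1.eigenvalues l) : ℂ)) ⊙
      (of fun k l => (((logMean (hD.1.eigenvalues k) (hD.1.eigenvalues l))⁻¹ : ℝ) : ℂ)) = of 1 := by
    ext k l
    simp [(logMean_pos (hD.eigenvalues_pos k) (hD.eigenvalues_pos l)).ne']
  have hJD' : JD = schurMulIn hD.1.eigenvectorUnitary _ :=
    funext fun B => (hJD B).trans (of_intervalIntegral_rpow_mul_mul_rpow hD B)
  have hK' : K = schurMulIn hD.1.eigenvectorUnitary _ :=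
    funext fun B => (hK B).trans (of_integral_resolvent_mul_mul_resolvent hD B)
  intro B
  rw [hJD', hK', schurMulIn_schurMulIn, schurMulIn_schurMulIn, hsymbols, hadamard_comm, hsymbols,
    schurMulIn_of_one]
  exact ⟨rfl, rfl⟩
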